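/- Let 0 < ε ≤ 10⁻⁸ and X large. If every nontrivial zero ρ = β + iγ of the Riemann zeta function with β ≥ 1 - 2·10⁻⁷ and |γ| ≤ X^{1.1} satisfies N(β, X^{1.1}) ≪ X^{0.1(1-β)/2} and β ≤ 1 - (log X)^{-0.667}, then for every integer n ∈ [X^{0.1}, 2X], the quantity |Σ_ρ n^{ρ-1}| over zeros ρ = β+iγ with β ≥ 1-10ε and |γ| ≤ X^{1.1} is O(exp(-(log X)^{0.33})). -/

import Mathlib

/-!
Write `u_ρ = (1 - β_ρ) log X`. Since `n ≥ X^{0.1}`, each term has size at most `exp(-0.1 u_ρ)`.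
Half of this decay is spent on the zero-free region, which gives `u_ρ ≥ (log X)^{0.333}`. The
other half, `exp(-0.05 u_ρ)`, is summed by grouping the zeros by `k = ⌈u_ρ⌉`: the density
estimate allows `≪ e^{0.05 k}` zeros in the `k`-th group, so each group contributes `O(1)`.
With `O(log X)` groups the sum is `≪ log X · exp(-0.05 (log X)^{0.333})`, which is
`≪ exp(-(log X)^{0.33})`.
-/

open Real Finset

theorem sum_exp_neg_le_of_card_le {ι : Type*} (s : Finset ι) (f : ι → ℝ) {A a U : ℝ}
    (ha : 0 ≤ a) (hf0 : ∀ i ∈ s, 0 ≤ f i) (hfU : ∀ i ∈ s, f i ≤ U)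
    (hcard : ∀ k : ℕ, (#{i ∈ s | f i ≤ k} : ℝ) ≤ A * exp (a * k)) :
    ∑ i ∈ s, exp (-(a * f i)) ≤ (⌈U⌉₊ + 1) * (A * exp a) := by
  have hmaps : ∀ i ∈ s, ⌈f i⌉₊ ∈ range (⌈U⌉₊ + 1) := fun i hi =>
    mem_range_succ_iff.mpr (Nat.ceil_mono (hfU i hi))
  have hfiber : ∀ k : ℕ, ∑ i ∈ s with ⌈f i⌉₊ = k, exp (-(a * f i)) ≤ A * exp a := by
    intro k
    have hterm : ∀ i ∈ {i ∈ s | ⌈f i⌉₊ = k}, exp (-(a * f i)) ≤ exp a * exp (-(a * k)) := by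
      intro i hi
      obtain ⟨his, rfl⟩ := mem_filter.mp hi
      rw [← exp_add, exp_le_exp]
      nlinarith [Nat.ceil_lt_add_one (hf0 i his)]
    have hsub : {i ∈ s | ⌈f i⌉₊ = k} ⊆ {i ∈ s | f i ≤ k} := by
      intro i hi
      obtain ⟨his, rfl⟩ := mem_filter.mp hi
      exact mem_filter.mpr ⟨his, Nat.le_ceil _⟩
    calc ∑ i ∈ s with ⌈f i⌉₊ = k, exp (-(a * f i))
        ≤ #{i ∈ s | ⌈f i⌉₊ = k} * (exp a * exp (-(a * k))) := by
          simpa only [nsmul_eq_mul] using sum_le_card_nsmul _ _ _ hterm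
      _ ≤ A * exp (a * k) * (exp a * exp (-(a * k))) := by
          gcongr
          exact le_trans (by exact_mod_cast card_le_card hsub) (hcard k)
      _ = A * exp a := by
          rw [mul_comm (exp a), ← mul_assoc, mul_assoc A, ← exp_add]
          simp
  calc ∑ i ∈ s, exp (-(a * f i))
      = ∑ k ∈ range (⌈U⌉₊ + 1), ∑ i ∈ s with ⌈f i⌉₊ = k, exp (-(a * f i)) :=
        (sum_fiberwise_of_maps_to hmaps _).symm
    _ ≤ ∑ _k ∈ range (⌈U⌉₊ + 1), A * exp a := sum_le_sum fun k _ => hfiber k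
    _ = (⌈U⌉₊ + 1) * (A * exp a) := by simp

theorem card_filter_mul_log_le_of_density {Z : Finset ℂ} {X C' c β₀ : ℝ} (hX : 1 < X)
    (hC' : 0 ≤ C') (hc : 0 ≤ c) (hZ : ∀ ρ ∈ Z, β₀ ≤ ρ.re)
    (hdens : ∀ β : ℝ, β₀ ≤ β → (#{ρ ∈ Z | β ≤ ρ.re} : ℝ) ≤ C' * X ^ (c * (1 - β)))
    (t : ℝ) : (#{ρ ∈ Z | (1 - ρ.re) * log X ≤ t} : ℝ) ≤ C' * exp (c * t) := by
  have hL : 0 < log X := log_pos hX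
  set β := max (1 - t / log X) β₀
  have hsub : {ρ ∈ Z | (1 - ρ.re) * log X ≤ t} ⊆ {ρ ∈ Z | β ≤ ρ.re} := by
    intro ρ hρ
    obtain ⟨hρZ, hρt⟩ := mem_filter.mp hρ
    have : 1 - t / log X ≤ ρ.re := by
      rw [sub_le_comm, le_div_iff₀ hL]; exact hρt
    exact mem_filter.mpr ⟨hρZ, max_le this (hZ ρ hρZ)⟩
  have hβ : (1 - β) * log X ≤ t := by
    rw [← le_div_iff₀ hL]; linarith [le_max_left (1 - t / log X) β₀]
  calc (#{ρ ∈ Z | (1 - ρ.re) * log X ≤ t} : ℝ)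
      ≤ #{ρ ∈ Z | β ≤ ρ.re} := by exact_mod_cast card_le_card hsub
    _ ≤ C' * X ^ (c * (1 - β)) := hdens β (le_max_right _ _)
    _ ≤ C' * exp (c * t) := by
      rw [rpow_def_of_pos (by linarith)]
      refine mul_le_mul_of_nonneg_left (exp_le_exp.mpr ?_) hC'
      nlinarith

theorem norm_natCast_cpow_sub_one_le {X c : ℝ} {n : ℕ} {ρ : ℂ} (hX : 0 < X)
    (hn : X ^ c ≤ n) (hρ : ρ.re ≤ 1) :
    ‖(n : ℂ) ^ (ρ - 1)‖ ≤ exp (-(c * ((1 - ρ.re) * log X))) := by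
  have hXc : 0 < X ^ c := rpow_pos_of_pos hX c
  have hn0 : 0 < n := by exact_mod_cast hXc.trans_le hn
  rw [Complex.norm_natCast_cpow_of_pos hn0]
  calc (n : ℝ) ^ (ρ - 1).re ≤ (X ^ c) ^ (ρ - 1).re :=
        rpow_le_rpow_of_nonpos hXc hn (by simpa using hρ)
    _ = exp (-(c * ((1 - ρ.re) * log X))) := by
      rw [← rpow_mul hX.le, rpow_def_of_pos hX]
      congr 1
      simp only [Complex.sub_re, Complex.one_re]
      ring

theorem mul_exp_neg_rpow_le {L : ℝ} (hL : exp 3000 ≤ L) :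
    L * exp (-(0.05 * L ^ (0.333 : ℝ))) ≤ exp (-L ^ (0.33 : ℝ)) := by
  have hL0 : 0 < L := (exp_pos _).trans_le hL
  have hlog : log L ≤ 4 * L ^ (0.33 : ℝ) := by
    refine (log_le_rpow_div hL0.le (by norm_num : (0 : ℝ) < 0.33)).trans ?_
    rw [div_le_iff₀ (by norm_num)]
    nlinarith [rpow_nonneg hL0.le (0.33 : ℝ)]
  have hsmall : (100 : ℝ) ≤ L ^ (0.003 : ℝ) := by
    have h9 : (100 : ℝ) ≤ exp (9 : ℕ) := by
      rw [← exp_one_pow]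
      nlinarith [exp_one_gt_d9, pow_le_pow_left₀ (by norm_num) exp_one_gt_d9.le 9]
    calc (100 : ℝ) ≤ exp (9 : ℕ) := h9
      _ = exp 3000 ^ (0.003 : ℝ) := by rw [← exp_mul]; norm_num
      _ ≤ L ^ (0.003 : ℝ) := by gcongr
  have hsplit : L ^ (0.333 : ℝ) = L ^ (0.33 : ℝ) * L ^ (0.003 : ℝ) := by
    rw [← rpow_add hL0]; norm_num
  calc L * exp (-(0.05 * L ^ (0.333 : ℝ))) = exp (log L - 0.05 * L ^ (0.333 : ℝ)) := by
        rw [exp_sub, exp_log hL0, exp_neg, div_eq_mul_inv]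
    _ ≤ exp (-L ^ (0.33 : ℝ)) := by
      rw [exp_le_exp, hsplit]
      nlinarith [rpow_nonneg hL0.le (0.33 : ℝ)]

theorem exp_neg_rpow_mul_ceil_le {L C' : ℝ} (hL : exp 3000 ≤ L) (hC' : 0 ≤ C') :
    exp (-(0.05 * L ^ (0.333 : ℝ))) * ((⌈L⌉₊ + 1) * (C' * exp 0.05))
      ≤ 6 * C' * exp (-L ^ (0.33 : ℝ)) := by
  have hL0 : 0 < L := (exp_pos _).trans_le hL
  have hceil : (⌈L⌉₊ : ℝ) + 1 ≤ 2 * L := by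
    linarith [Nat.ceil_lt_add_one hL0.le, add_one_le_exp (3000 : ℝ)]
  have hexp : exp 0.05 ≤ 3 := by
    linarith [exp_le_exp.mpr (by norm_num : (0.05 : ℝ) ≤ 1), exp_one_lt_d9]
  calc exp (-(0.05 * L ^ (0.333 : ℝ))) * ((⌈L⌉₊ + 1) * (C' * exp 0.05))
      ≤ exp (-(0.05 * L ^ (0.333 : ℝ))) * (2 * L * (C' * 3)) := by gcongr
    _ = 6 * C' * (L * exp (-(0.05 * L ^ (0.333 : ℝ)))) := by ring
    _ ≤ 6 * C' * exp (-L ^ (0.33 : ℝ)) := by gcongr; exact mul_exp_neg_rpow_le hL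

theorem norm_natCast_cpow_sub_one_le_of_zero_free {X : ℝ} {n : ℕ} {ρ : ℂ} (hX : 1 < X)
    (hn : X ^ (0.1 : ℝ) ≤ n) (hρ : ρ.re ≤ 1 - log X ^ (-(0.667 : ℝ))) :
    ‖(n : ℂ) ^ (ρ - 1)‖
      ≤ exp (-(0.05 * log X ^ (0.333 : ℝ))) * exp (-(0.05 * ((1 - ρ.re) * log X))) := by
  have hL : 0 < log X := log_pos hX
  have hfree : log X ^ (0.333 : ℝ) ≤ (1 - ρ.re) * log X := by
    calc log X ^ (0.333 : ℝ) = log X ^ (-(0.667 : ℝ)) * log X := by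
          rw [← rpow_add_one hL.ne']; norm_num
      _ ≤ (1 - ρ.re) * log X := by gcongr; linarith
  have hρ1 : ρ.re ≤ 1 := by linarith [rpow_nonneg hL.le (-(0.667 : ℝ))]
  refine (norm_natCast_cpow_sub_one_le (by linarith) hn hρ1).trans ?_
  rw [← exp_add, exp_le_exp]
  linarith

/-- Given the Vinogradov–Korobov zero-free region and a zero-density estimate
near the 1-line, for `n ∈ [X^{0.1}, 2X]` the sum `Σ_ρ n^{ρ-1}` over nontrivial
zeta zeros `ρ = β + iγ` with `β ≥ 1 - 10ε`, `|γ| ≤ X^{1.1}` is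
`O(exp(-(log X)^{0.33}))`. -/
theorem stmt_16 :
    ∀ C' : ℝ, 0 < C' → ∃ C X₀ : ℝ, 0 < C ∧ ∀ ε X : ℝ, 0 < ε → ε ≤ 10 ^ (-8 : ℤ) →
      X₀ ≤ X → ∀ Z : Finset ℂ,
      -- `Z` is exactly the set of nontrivial zeros in the region
      (∀ ρ : ℂ, ρ ∈ Z ↔ riemannZeta ρ = 0 ∧ 0 < ρ.re ∧ ρ.re < 1 ∧
          1 - 10 * ε ≤ ρ.re ∧ |ρ.im| ≤ X ^ (1.1 : ℝ)) →
      -- zero-density estimate `N(β, X^{1.1}) ≪ X^{0.1(1-β)/2}` near the 1-line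
      (∀ β : ℝ, 1 - 2 * 10 ^ (-7 : ℤ) ≤ β →
          ((Z.filter (fun ρ => β ≤ ρ.re)).card : ℝ) ≤ C' * X ^ (0.1 * (1 - β) / 2)) →
      -- Vinogradov–Korobov zero-free region
      (∀ ρ ∈ Z, ρ.re ≤ 1 - (Real.log X) ^ (-(0.667 : ℝ))) →
      ∀ n : ℕ, X ^ (0.1 : ℝ) ≤ (n : ℝ) → (n : ℝ) ≤ 2 * X →
        ‖∑ ρ ∈ Z, (n : ℂ) ^ (ρ - 1)‖
          ≤ C * Real.exp (-(Real.log X) ^ (0.33 : ℝ)) := by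
  intro C' hC'
  refine ⟨6 * C', exp (exp 3000), by positivity, ?_⟩
  intro ε X _ hε X₀_le Z hZ hdens hzfr n hn _
  have hX0 : 0 < X := (exp_pos _).trans_le X₀_le
  have hX1 : 1 < X := (one_lt_exp_iff.mpr (exp_pos _)).trans_le X₀_le
  have hL : exp 3000 ≤ log X := (le_log_iff_exp_le hX0).mpr X₀_le
  have hL0 : 0 < log X := log_pos hX1
  have hre : ∀ ρ ∈ Z, 0 < ρ.re ∧ ρ.re < 1 ∧ 1 - 2 * 10 ^ (-7 : ℤ) ≤ ρ.re := by
    intro ρ hρ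
    obtain ⟨-, hpos, hlt, hge, -⟩ := (hZ ρ).mp hρ
    norm_num at hε ⊢
    exact ⟨hpos, hlt, by linarith⟩
  have hcount (k : ℕ) : (#{ρ ∈ Z | (1 - ρ.re) * log X ≤ k} : ℝ) ≤ C' * exp (0.05 * k) :=
    card_filter_mul_log_le_of_density hX1 hC'.le (by norm_num) (fun ρ hρ => (hre ρ hρ).2.2)
      (fun β hβ => by convert hdens β hβ using 3; ring) k
  have hsum := sum_exp_neg_le_of_card_le Z (fun ρ => (1 - ρ.re) * log X) (U := log X)
    (by norm_num : (0 : ℝ) ≤ 0.05) (fun ρ hρ => mul_nonneg (by linarith [hre ρ hρ]) hL0.le)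
    (fun ρ hρ => by nlinarith [hre ρ hρ]) hcount
  calc ‖∑ ρ ∈ Z, (n : ℂ) ^ (ρ - 1)‖ ≤ ∑ ρ ∈ Z, ‖(n : ℂ) ^ (ρ - 1)‖ := norm_sum_le _ _
    _ ≤ ∑ ρ ∈ Z, exp (-(0.05 * log X ^ (0.333 : ℝ))) *
          exp (-(0.05 * ((1 - ρ.re) * log X))) :=
        sum_le_sum fun ρ hρ => norm_natCast_cpow_sub_one_le_of_zero_free hX1 hn (hzfr ρ hρ)
    _ ≤ exp (-(0.05 * log X ^ (0.333 : ℝ))) * ((⌈log X⌉₊ + 1) * (C' * exp 0.05)) := by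
        rw [← mul_sum]; gcongr
    _ ≤ 6 * C' * exp (-log X ^ (0.33 : ℝ)) := exp_neg_rpow_mul_ceil_le hL hC'.le
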